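/- arXiv:math/9801112 — 8 statements merged into one kernel-verified Lean document; each statement's English description precedes it below -/
import Mathlib

section
/- Let q, t be nonzero complex numbers, let m ≥ 1, and let x_1, …, x_m be nonzero complex numbers satisfying the genericity hypothesis. Then for every index i ∈ {1,…,m} and every sign vector ε ∈ {+1,−1}^m with ε_i = +1, writing ε' for the sign vector that agrees with ε at all positions except ε'_i = −1, one has γ_{ε'}(q,t) = ( ∏_{j ≠ i} η^{(+1,ε_j)}(q,t;ξ_{ij}) / η^{(−1,ε_j)}(q,t;ξ_{ij}) ) · γ_ε(q,t). (This is the system of equations (3.14) solved by the explicit formula (3.15), the key step in the proof of Theorem 3.1 of the paper; the solvability is nontrivial since there are m·2^{m−1} equations for 2^m − 1 unknowns.) -/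
/-!
Write `γ_ε = ∏_{k ∈ M_-} ∏_{j ∈ M_+} f k j` with `f k j = η^{(+,+)}(ξ_{kj}) / η^{(-,+)}(ξ_{kj})`.
Moving `i` from `M_+` to `M_-` gains the row `∏_{j ∈ M_+ ∖ i} f i j` and loses the column
`∏_{k ∈ M_-} f k i`. Since `η^{(+,+)}(ξ⁻¹) = η^{(-,-)}(ξ)` and `η^{(-,+)}(ξ⁻¹) = η^{(+,-)}(ξ)`, the
factor on the right for `ε_j = -1` is `(f j i)⁻¹`, so the product on the right is exactly
row / column; genericity makes the column invertible.
-/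

open Finset

/-- The functions `η^{(ε,ε')}(q,t;ξ)` of the paper; `true` encodes `+1`, `false` encodes `-1`. -/
noncomputable def eta (e e' : Bool) (q t ξ : ℂ) : ℂ :=
  match e, e' with
  | true,  true  => (q * ξ⁻¹ - q⁻¹ * ξ) / (ξ⁻¹ - ξ)
  | false, true  => (q * t⁻¹ * ξ⁻¹ - q⁻¹ * t * ξ) / (t⁻¹ * ξ⁻¹ - t * ξ)
  | true,  false => (q * t⁻¹ * ξ - q⁻¹ * t * ξ⁻¹) / (t⁻¹ * ξ - t * ξ⁻¹)
  | false, false => (q * ξ - q⁻¹ * ξ⁻¹) / (ξ - ξ⁻¹)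

/-- The coefficients `γ_ε(q,t)` of Theorem 3.1 of the paper, with `ξ_{ij} = x_i / x_j`. -/
noncomputable def gammaCoeff {m : ℕ} (q t : ℂ) (x : Fin m → ℂ) (ε : Fin m → Bool) : ℂ :=
  ∏ i ∈ univ.filter (fun i => ε i = false), ∏ j ∈ univ.filter (fun j => ε j = true),
    eta true true q t (x i / x j) / eta false true q t (x i / x j)

section CrossProd

variable {ι α : Type*} [Fintype ι] [DecidableEq ι]

def crossProd [CommMonoid α] (f : ι → ι → α) (ε : ι → Bool) : α :=
  ∏ k ∈ univ.filter (fun k => ε k = false), ∏ j ∈ univ.filter (fun j => ε j = true), f k j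

lemma filter_update_false_eq_false {ε : ι → Bool} {i : ι} :
    univ.filter (fun k => Function.update ε i false k = false) =
      insert i (univ.filter fun k => ε k = false) := by
  ext k
  by_cases hk : k = i <;> simp [Function.update_apply, hk]

lemma filter_update_false_eq_true {ε : ι → Bool} {i : ι} :
    univ.filter (fun k => Function.update ε i false k = true) =
      (univ.filter fun k => ε k = true).erase i := by
  ext k
  by_cases hk : k = i <;> simp [Function.update_apply, hk]

lemma crossProd_update_false_mul [CommMonoid α] (f : ι → ι → α) {ε : ι → Bool} {i : ι}
    (hi : ε i = true) :
    crossProd f (Function.update ε i false) * ∏ k ∈ univ.filter (fun k => ε k = false), f k i =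
      (∏ j ∈ (univ.filter fun j => ε j = true).erase i, f i j) * crossProd f ε := by
  have hi_plus : i ∈ univ.filter fun j => ε j = true := by simp [hi]
  have hi_minus : i ∉ univ.filter fun k => ε k = false := by simp [hi]
  simp only [crossProd, filter_update_false_eq_false, filter_update_false_eq_true,
    prod_insert hi_minus, ← mul_prod_erase _ _ hi_plus, prod_mul_distrib]
  ac_rfl

lemma prod_erase_ite_eq [CommMonoid α] (a b : ι → α) {ε : ι → Bool} {i : ι}
    (hi : ε i = true) :
    ∏ j ∈ univ.erase i, (if ε j then a j else b j) =
      (∏ j ∈ (univ.filter fun j => ε j = true).erase i, a j) *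
        ∏ j ∈ univ.filter (fun j => ε j = false), b j := by
  rw [← prod_filter_mul_prod_filter_not (univ.erase i) (fun j => ε j = true)]
  congr 1
  · refine prod_congr (by ext j; simp [and_comm]) fun j hj => ?_
    simp [(mem_filter.mp (mem_of_mem_erase hj)).2]
  · refine prod_congr (by ext j; by_cases hj : j = i <;> simp [hj, hi]) fun j hj => ?_
    simp [(mem_filter.mp hj).2]

theorem crossProd_update_false [CommGroupWithZero α] (f : ι → ι → α) {ε : ι → Bool} {i : ι}
    (hi : ε i = true) (hf : ∀ k, ε k = false → f k i ≠ 0) :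
    crossProd f (Function.update ε i false) =
      (∏ j ∈ univ.erase i, if ε j then f i j else (f j i)⁻¹) * crossProd f ε := by
  have hprod : ∏ k ∈ univ.filter (fun k => ε k = false), f k i ≠ 0 :=
    prod_ne_zero_iff.mpr fun k hk => hf k (mem_filter.mp hk).2
  rw [prod_erase_ite_eq _ _ hi, prod_inv_distrib, ← mul_left_inj' hprod,
    crossProd_update_false_mul f hi]
  field_simp

end CrossProd

noncomputable def etaRatio (q t ξ : ℂ) : ℂ := eta true true q t ξ / eta false true q t ξ

lemma gammaCoeff_eq_crossProd {m : ℕ} (q t : ℂ) (x : Fin m → ℂ) (ε : Fin m → Bool) :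
    gammaCoeff q t x ε = crossProd (fun k j => etaRatio q t (x k / x j)) ε :=
  rfl

lemma eta_div_eta_eq_ite (e' : Bool) (q t ξ : ℂ) :
    eta true e' q t ξ / eta false e' q t ξ =
      if e' then etaRatio q t ξ else (etaRatio q t ξ⁻¹)⁻¹ := by
  cases e' <;> simp [etaRatio, eta]

lemma eta_true_true_ne_zero {q ξ : ℂ} (t : ℂ) (hq : q ≠ 0) (hξ : ξ ≠ 0)
    (h1 : ξ ^ 2 ≠ 1) (hq2 : ξ ^ 2 ≠ q ^ 2) : eta true true q t ξ ≠ 0 := by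
  simp only [eta]
  refine div_ne_zero (fun h => hq2 ?_) (fun h => h1 ?_)
  · field_simp at h
    linear_combination -h
  · field_simp at h
    linear_combination -h

lemma eta_false_true_ne_zero {q t ξ : ℂ} (hq : q ≠ 0) (ht : t ≠ 0) (hξ : ξ ≠ 0)
    (ht2 : ξ ^ 2 ≠ (t ^ 2)⁻¹) (hqt2 : ξ ^ 2 ≠ q ^ 2 * (t ^ 2)⁻¹) :
    eta false true q t ξ ≠ 0 := by
  simp only [eta]
  refine div_ne_zero (fun h => hqt2 ?_) (fun h => ht2 ?_)
  · field_simp at h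
    field_simp
    linear_combination -h
  · field_simp at h
    field_simp
    linear_combination -h

theorem stmt0_general (q t : ℂ) (hq : q ≠ 0) (ht : t ≠ 0) (m : ℕ)
    (x : Fin m → ℂ) (hx : ∀ i, x i ≠ 0)
    (hgen : ∀ i j : Fin m, i ≠ j →
      (x i) ^ 2 / (x j) ^ 2 ∉
        ({1, t ^ 2, (t ^ 2)⁻¹, q ^ 2, (q ^ 2)⁻¹, q ^ 2 * (t ^ 2)⁻¹, (q ^ 2)⁻¹ * t ^ 2} : Set ℂ))
    (i : Fin m) (ε : Fin m → Bool) (hi : ε i = true) :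
    gammaCoeff q t x (Function.update ε i false) =
      (∏ j ∈ univ.erase i,
        eta true (ε j) q t (x i / x j) / eta false (ε j) q t (x i / x j)) *
      gammaCoeff q t x ε := by
  have hne : ∀ k, ε k = false → etaRatio q t (x k / x i) ≠ 0 := by
    intro k hk
    have hki : k ≠ i := by rintro rfl; simp [hi] at hk
    have hgen_ki := hgen k i hki
    rw [← div_pow] at hgen_ki
    simp only [Set.mem_insert_iff, Set.mem_singleton_iff, not_or] at hgen_ki
    obtain ⟨h1, -, ht2, hq2, -, hqt2, -⟩ := hgen_ki
    have hξ := div_ne_zero (hx k) (hx i)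
    exact div_ne_zero (eta_true_true_ne_zero t hq hξ h1 hq2)
      (eta_false_true_ne_zero hq ht hξ ht2 hqt2)
  simp only [gammaCoeff_eq_crossProd, eta_div_eta_eq_ite, inv_div]
  exact crossProd_update_false _ hi hne

/-- Equation (3.14) of the paper: flipping the `i`-th sign from `+` to `-` multiplies `γ_ε`
by `∏_{j ≠ i} η^{(+,ε_j)}(q,t;ξ_{ij}) / η^{(-,ε_j)}(q,t;ξ_{ij})`. -/
theorem stmt0 (q t : ℂ) (hq : q ≠ 0) (ht : t ≠ 0) (m : ℕ) (hm : 1 ≤ m)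
    (x : Fin m → ℂ) (hx : ∀ i, x i ≠ 0)
    (hgen : ∀ i j : Fin m, i ≠ j →
      (x i) ^ 2 / (x j) ^ 2 ∉
        ({1, t ^ 2, (t ^ 2)⁻¹, q ^ 2, (q ^ 2)⁻¹, q ^ 2 * (t ^ 2)⁻¹, (q ^ 2)⁻¹ * t ^ 2} : Set ℂ))
    (i : Fin m) (ε : Fin m → Bool) (hi : ε i = true) :
    gammaCoeff q t x (Function.update ε i false) =
      (∏ j ∈ univ.erase i,
        eta true (ε j) q t (x i / x j) / eta false (ε j) q t (x i / x j)) *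
      gammaCoeff q t x ε :=
  stmt0_general q t hq ht m x hx hgen i ε hi
end

section
/- Let q, t be nonzero complex numbers and m ≥ 1, and assume q^{2k} ≠ 1 for all k with 1 ≤ k ≤ m−1 and t² ≠ q^{2k} for all integers k with −m ≤ k ≤ m. Define the coefficients γ_ε(q,t) with respect to the q-string ξ_{ij} = q^{i−j}. Then γ_ε(q,t) = 0 whenever there exists an index j ∈ {1,…,m−1} with ε_j = +1 and ε_{j+1} = −1; that is, for points lined up in a single q-string only the sign vectors of the form (−,…,−,+,…,+) (all minus signs preceding all plus signs) give a nonvanishing coefficient. (This is the assertion surrounding equation (3.25) of the paper; consequently the corresponding element T_m(z) of W_{q,t}[sl_2] has only m + 1 terms.) -/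
open Finset

/-- `η^{(+,+)}(q,t;ξ)`. -/
noncomputable def etaPP (q t ξ : ℂ) : ℂ := (q * ξ⁻¹ - q⁻¹ * ξ) / (ξ⁻¹ - ξ)

/-- `η^{(-,+)}(q,t;ξ)`. -/
noncomputable def etaMP (q t ξ : ℂ) : ℂ :=
  (q * t⁻¹ * ξ⁻¹ - q⁻¹ * t * ξ) / (t⁻¹ * ξ⁻¹ - t * ξ)

/-- The coefficients `γ_ε(q,t)` of Theorem 3.1 of the paper for the `q`-string
`ξ_{ij} = q^{i-j}`; `true` encodes sign `+1` and `false` encodes sign `-1`. -/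
noncomputable def gammaString (m : ℕ) (q t : ℂ) (ε : Fin m → Bool) : ℂ :=
  ∏ i ∈ univ.filter (fun i => ε i = false), ∏ j ∈ univ.filter (fun j => ε j = true),
    etaPP q t (q ^ ((i : ℤ) - (j : ℤ))) / etaMP q t (q ^ ((i : ℤ) - (j : ℤ)))

/-- For points lined up in a single `q`-string, `γ_ε(q,t) = 0` whenever a `+` sign is
immediately followed by a `-` sign; only sign vectors of the form `(-,…,-,+,…,+)` give a
nonvanishing coefficient (assertion around (3.25) of the paper). -/
theorem stmt3 (q t : ℂ) (hq : q ≠ 0) (ht : t ≠ 0) (m : ℕ) (hm : 1 ≤ m)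
    (hq' : ∀ k : ℕ, 1 ≤ k → k ≤ m - 1 → q ^ (2 * k) ≠ 1)
    (ht' : ∀ k : ℤ, -(m : ℤ) ≤ k → k ≤ (m : ℤ) → t ^ 2 ≠ q ^ (2 * k))
    (ε : Fin m → Bool)
    (hε : ∃ j : Fin m, ∃ h : (j : ℕ) + 1 < m,
      ε j = true ∧ ε ⟨(j : ℕ) + 1, h⟩ = false) :
    gammaString m q t ε = 0 := by
  obtain ⟨j, h, hj, hj1⟩ := hε
  unfold gammaString
  apply Finset.prod_eq_zero (i := (⟨(j : ℕ) + 1, h⟩ : Fin m))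
  · simp [hj1]
  apply Finset.prod_eq_zero (i := j)
  · simp [hj]
  have h1 : (((⟨(j : ℕ) + 1, h⟩ : Fin m) : ℕ) : ℤ) - ((j : ℕ) : ℤ) = 1 := by
    simp
  rw [h1, zpow_one, etaPP, mul_inv_cancel₀ hq, inv_mul_cancel₀ hq]
  simp
end

section
/- Let q, t be nonzero complex numbers and m ≥ 1, and assume q^{2k} ≠ 1 for all k with 1 ≤ k ≤ m and t² ≠ q^{2k} for all integers k with −m ≤ k ≤ m. Define the coefficients γ_ε(q,t) with respect to the q-string ξ_{ij} = q^{i−j}. Then for every n with 0 ≤ n ≤ m, the coefficient of the sign vector (−,…,−,+,…,+) with exactly n leading minus signs equals γ_{m,n}(q,t) := ∏_{k=1}^{n} [ (q^k t^{−1} − q^{−k} t)(q^{m−k+1} − q^{−(m−k+1)}) ] / [ (q^k − q^{−k})(q^{m−k+1} t^{−1} − q^{−(m−k+1)} t) ]. (This is formula (3.26) of the paper for the coefficients of the sl_2 generator T_m(z) associated to a q-string of length m.) -/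
open Finset

/-- The explicit coefficients `γ_{m,n}(q,t)` of formula (3.26) of the paper:
`γ_{m,n} = ∏_{k=1}^{n} ((q^k t⁻¹ - q^{-k} t)(q^{m-k+1} - q^{-(m-k+1)})) /
((q^k - q^{-k})(q^{m-k+1} t⁻¹ - q^{-(m-k+1)} t))`. -/
noncomputable def gammaMN (m n : ℕ) (q t : ℂ) : ℂ :=
  ∏ k ∈ Finset.range n,
    ((q ^ (k + 1) * t⁻¹ - q⁻¹ ^ (k + 1) * t) * (q ^ (m - k) - q⁻¹ ^ (m - k))) /
    ((q ^ (k + 1) - q⁻¹ ^ (k + 1)) * (q ^ (m - k) * t⁻¹ - q⁻¹ ^ (m - k) * t))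

/-!
On the `q`-string, `ξ_{ij} = q^{-(j-i)}`, and with
`w(a) = (q^a - q^{-a}) / (q^a t⁻¹ - q^{-a} t)` (`qtWeight` below) one has
`η^{(+,+)}(q^{-a}) / η^{(-,+)}(q^{-a}) = w(a+1) / w(a)`. Hence for the sign vector with
`n` leading minus signs, the inner product over `j = n, …, m-1` telescopes to `w(m-i) / w(n-i)`,
which is legitimate because the hypotheses on `q` and `t` make every
`w(a)` with `1 ≤ a ≤ m` nonzero. Reflecting `i ↦ n-1-i` in the denominators gives `γ_{m,n}`.
-/

theorem Finset.prod_Ico_div_of_ne_zero {G : Type*} [CommGroupWithZero G] {f : ℕ → G}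
    {n m : ℕ} (hnm : n ≤ m) (hf : ∀ j ∈ Icc n m, f j ≠ 0) :
    ∏ j ∈ Ico n m, f (j + 1) / f j = f m / f n := by
  induction m, hnm using Nat.le_induction with
  | base => simp [div_self (hf n (by simp))]
  | succ m hnm ih =>
    rw [prod_Ico_succ_top hnm, ih fun j hj => hf j (Icc_subset_Icc_right m.le_succ hj),
      div_mul_div_cancel₀' (hf m (by simp [hnm]))]

theorem Finset.prod_filter_univ_fin {M : Type*} [CommMonoid M] (m : ℕ) (p : ℕ → Prop)
    [DecidablePred p] (f : ℕ → M) :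
    ∏ i ∈ univ.filter (fun i : Fin m => p i), f i = ∏ i ∈ (range m).filter p, f i := by
  rw [prod_filter, prod_filter, Fin.prod_univ_eq_prod_range (fun i => if p i then f i else 1)]

section Nonvanishing

variable {K : Type*} [Field K] {q t : K}

theorem pow_sub_inv_pow_ne_zero (hq : q ≠ 0) {a : ℕ} (h : q ^ (2 * a) ≠ 1) :
    q ^ a - q⁻¹ ^ a ≠ 0 := by
  refine fun h0 => h ?_
  rw [mul_comm, pow_mul, sq]
  nth_rewrite 2 [sub_eq_zero.mp h0]
  rw [← mul_pow, mul_inv_cancel₀ hq, one_pow]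

theorem pow_mul_inv_sub_inv_pow_mul_ne_zero (hq : q ≠ 0) (ht : t ≠ 0) {a : ℕ}
    (h : t ^ 2 ≠ q ^ (2 * a)) : q ^ a * t⁻¹ - q⁻¹ ^ a * t ≠ 0 := by
  refine fun h0 => h ?_
  calc t ^ 2 = (q⁻¹ ^ a * t) * (q ^ a * t) := by
        rw [mul_mul_mul_comm, ← mul_pow, inv_mul_cancel₀ hq, one_pow, one_mul, sq]
    _ = (q ^ a * t⁻¹) * (q ^ a * t) := by rw [sub_eq_zero.mp h0]
    _ = q ^ (2 * a) := by
        rw [mul_mul_mul_comm, inv_mul_cancel₀ ht, mul_one, ← pow_add, two_mul]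

end Nonvanishing

theorem zpow_natCast_sub_natCast_eq_inv_pow {G : Type*} [DivisionRing G] (q : G) {i j : ℕ}
    (h : i ≤ j) :
    q ^ ((i : ℤ) - j) = q⁻¹ ^ (j - i) := by
  rw [← neg_sub, ← Nat.cast_sub h, zpow_neg, zpow_natCast, inv_pow]

section QString

variable (q t : ℂ)

noncomputable def qtWeight (a : ℕ) : ℂ :=
  (q ^ a - q⁻¹ ^ a) / (q ^ a * t⁻¹ - q⁻¹ ^ a * t)

theorem etaPP_div_etaMP_inv_pow (a : ℕ) :
    etaPP q t (q⁻¹ ^ a) / etaMP q t (q⁻¹ ^ a) = qtWeight q t (a + 1) / qtWeight q t a := by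
  simp only [etaPP, etaMP, qtWeight, inv_pow, inv_inv, pow_succ, div_eq_mul_inv, mul_inv]
  ring

theorem gammaMN_eq_prod_qtWeight (m n : ℕ) :
    gammaMN m n q t = ∏ k ∈ range n, qtWeight q t (m - k) / qtWeight q t (k + 1) := by
  refine prod_congr rfl fun k _ => ?_
  simp only [qtWeight, div_eq_mul_inv, mul_inv, inv_inv]
  ring

variable {q t}

theorem qtWeight_ne_zero (hq : q ≠ 0) (ht : t ≠ 0) {m : ℕ}
    (hq' : ∀ k : ℕ, 1 ≤ k → k ≤ m → q ^ (2 * k) ≠ 1)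
    (ht' : ∀ k : ℤ, -(m : ℤ) ≤ k → k ≤ (m : ℤ) → t ^ 2 ≠ q ^ (2 * k))
    {a : ℕ} (ha : 1 ≤ a) (ham : a ≤ m) : qtWeight q t a ≠ 0 := by
  have hqt : t ^ 2 ≠ q ^ (2 * a) := by
    exact_mod_cast ht' a (by omega) (by exact_mod_cast ham)
  exact div_ne_zero (pow_sub_inv_pow_ne_zero hq (hq' a ha ham))
    (pow_mul_inv_sub_inv_pow_mul_ne_zero hq ht hqt)

theorem gammaString_decide_le_eq_prod (m n : ℕ) (hn : n ≤ m) :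
    gammaString m q t (fun i => decide (n ≤ (i : ℕ))) =
      ∏ i ∈ range n, ∏ j ∈ Ico n m,
        etaPP q t (q ^ ((i : ℤ) - j)) / etaMP q t (q ^ ((i : ℤ) - j)) := by
  let R (i j : ℕ) : ℂ := etaPP q t (q ^ ((i : ℤ) - j)) / etaMP q t (q ^ ((i : ℤ) - j))
  have hminus : (range m).filter (fun i => ¬ n ≤ i) = range n := by
    ext i; simp only [mem_filter, mem_range]; omega
  have hplus : (range m).filter (fun j => n ≤ j) = Ico n m := by
    ext j; simp only [mem_filter, mem_range, mem_Ico]; omega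
  calc gammaString m q t (fun i => decide (n ≤ (i : ℕ)))
      = ∏ i ∈ univ.filter (fun i : Fin m => ¬ n ≤ (i : ℕ)),
          ∏ j ∈ univ.filter (fun j : Fin m => n ≤ (j : ℕ)), R i j := by
        simp only [gammaString, decide_eq_true_eq, decide_eq_false_iff_not, R]
    _ = ∏ i ∈ range n, ∏ j ∈ univ.filter (fun j : Fin m => n ≤ (j : ℕ)), R i j := by
        rw [prod_filter_univ_fin m (fun i => ¬ n ≤ i)
          (fun i => ∏ j ∈ univ.filter (fun j : Fin m => n ≤ (j : ℕ)), R i j), hminus]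
    _ = ∏ i ∈ range n, ∏ j ∈ Ico n m, R i j :=
        prod_congr rfl fun i _ => by rw [prod_filter_univ_fin m (n ≤ ·) (R i), hplus]

theorem prod_Ico_etaPP_div_etaMP (hq : q ≠ 0) (ht : t ≠ 0) {m : ℕ}
    (hq' : ∀ k : ℕ, 1 ≤ k → k ≤ m → q ^ (2 * k) ≠ 1)
    (ht' : ∀ k : ℤ, -(m : ℤ) ≤ k → k ≤ (m : ℤ) → t ^ 2 ≠ q ^ (2 * k))
    {n i : ℕ} (hi : i < n) (hn : n ≤ m) :
    ∏ j ∈ Ico n m, etaPP q t (q ^ ((i : ℤ) - j)) / etaMP q t (q ^ ((i : ℤ) - j)) =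
      qtWeight q t (m - i) / qtWeight q t (n - i) := by
  calc _ = ∏ j ∈ Ico n m, qtWeight q t (j + 1 - i) / qtWeight q t (j - i) :=
        prod_congr rfl fun j hj => by
          have hij : i ≤ j := by have := (mem_Ico.mp hj).1; omega
          rw [zpow_natCast_sub_natCast_eq_inv_pow q hij, etaPP_div_etaMP_inv_pow,
            Nat.sub_add_comm hij]
    _ = _ := prod_Ico_div_of_ne_zero (f := fun j => qtWeight q t (j - i)) hn
        fun j hj => by
          have := mem_Icc.mp hj
          exact qtWeight_ne_zero hq ht hq' ht' (by omega) (by omega)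

end QString

theorem stmt4_general (q t : ℂ) (hq : q ≠ 0) (ht : t ≠ 0) (m : ℕ)
    (hq' : ∀ k : ℕ, 1 ≤ k → k ≤ m → q ^ (2 * k) ≠ 1)
    (ht' : ∀ k : ℤ, -(m : ℤ) ≤ k → k ≤ (m : ℤ) → t ^ 2 ≠ q ^ (2 * k))
    (n : ℕ) (hn : n ≤ m) :
    gammaString m q t (fun i => decide (n ≤ (i : ℕ))) = gammaMN m n q t := by
  rw [gammaString_decide_le_eq_prod m n hn,
    prod_congr rfl fun i hi => prod_Ico_etaPP_div_etaMP hq ht hq' ht' (mem_range.mp hi) hn,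
    gammaMN_eq_prod_qtWeight, prod_div_distrib, prod_div_distrib,
    ← prod_range_reflect (fun k => qtWeight q t (k + 1)) n]
  refine congrArg _ (prod_congr rfl fun i hi => ?_)
  have := mem_range.mp hi
  congr 1
  omega

/-- Formula (3.26) of the paper: for a `q`-string of length `m`, the coefficient of the
sign vector `(-,…,-,+,…,+)` with exactly `n` leading minus signs equals `γ_{m,n}(q,t)`. -/
theorem stmt4 (q t : ℂ) (hq : q ≠ 0) (ht : t ≠ 0) (m : ℕ) (hm : 1 ≤ m)
    (hq' : ∀ k : ℕ, 1 ≤ k → k ≤ m → q ^ (2 * k) ≠ 1)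
    (ht' : ∀ k : ℤ, -(m : ℤ) ≤ k → k ≤ (m : ℤ) → t ^ 2 ≠ q ^ (2 * k))
    (n : ℕ) (hn : n ≤ m) :
    gammaString m q t (fun i => decide (n ≤ (i : ℕ))) = gammaMN m n q t :=
  stmt4_general q t hq ht m hq' ht' n hn
end

section
/- Let K be a field, ℓ ≥ 2, u ∈ K a nonzero scalar, and C an ℓ×ℓ matrix over K. If i ≠ j are indices with C_{ii} = C_{jj} = u + u^{−1} and C_{ij} = C_{ji} = −1, then the matrices T_i(u,C) = 1 − u (C e_i) e_iᵀ and T_j(u,C) = 1 − u (C e_j) e_jᵀ satisfy the braid relation T_i(u,C) T_j(u,C) T_i(u,C) = T_j(u,C) T_i(u,C) T_j(u,C). (This is the second relation of display (3.38) of the paper, the case C_{ij}C_{ji} = 1 of the deformed Weyl group relations of T_{q,t}[g].) -/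
/-- The matrix `T_i(u,C) = 1 - u (C e_i) e_iᵀ`, i.e. with entries
`(T_i(u,C))_{kj} = δ_{kj} - u δ_{ij} C_{ki}`, giving the action of the deformed Weyl group
generator `T_i` of `T_{q,t}[g]` on the degree-`m` Heisenberg generators. -/
def TWeyl {K : Type*} [Field K] {l : ℕ} (u : K) (C : Matrix (Fin l) (Fin l) K) (i : Fin l) :
    Matrix (Fin l) (Fin l) K :=
  1 - u • Matrix.of (fun k j => if j = i then C k i else 0)

/-- Product rule for "single column" matrices: the matrix with column `v` in position `i`
times the matrix with column `w` in position `j` equals `w i` times the matrix with column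
`v` in position `j`. -/
lemma Ecol_mul {K : Type*} [Field K] {l : ℕ} (v w : Fin l → K) (i j : Fin l) :
    (Matrix.of (fun k m => if m = i then v k else 0) : Matrix (Fin l) (Fin l) K) *
      Matrix.of (fun k m => if m = j then w k else 0) =
    w i • Matrix.of (fun k m => if m = j then v k else 0) := by
  ext k m
  simp [Matrix.mul_apply, ite_mul, mul_ite, mul_comm]

/-- The second relation of display (3.38) of the paper: if `C_{ii} = C_{jj} = u + u⁻¹` and
`C_{ij} = C_{ji} = -1` for `i ≠ j`, then `T_i(u,C)` and `T_j(u,C)` satisfy the braid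
relation. -/
theorem stmt8 {K : Type*} [Field K] (l : ℕ) (hl : 2 ≤ l) (u : K) (hu : u ≠ 0)
    (C : Matrix (Fin l) (Fin l) K) (i j : Fin l) (hij : i ≠ j)
    (hii : C i i = u + u⁻¹) (hjj : C j j = u + u⁻¹)
    (h1 : C i j = -1) (h2 : C j i = -1) :
    TWeyl u C i * TWeyl u C j * TWeyl u C i = TWeyl u C j * TWeyl u C i * TWeyl u C j := by
  show (1 - u • Matrix.of (fun k m => if m = i then C k i else 0)) *
      (1 - u • Matrix.of (fun k m => if m = j then C k j else 0)) *
      (1 - u • Matrix.of (fun k m => if m = i then C k i else 0)) =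
    (1 - u • Matrix.of (fun k m => if m = j then C k j else 0)) *
      (1 - u • Matrix.of (fun k m => if m = i then C k i else 0)) *
      (1 - u • Matrix.of (fun k m => if m = j then C k j else 0))
  simp only [sub_mul, mul_sub, one_mul, mul_one, smul_mul_assoc, mul_smul_comm, smul_smul,
    Ecol_mul, h1, h2, hii, hjj]
  match_scalars <;> field_simp <;> ring
end

section
/- Let q, t be nonzero complex numbers. For every ℓ ≥ 2, the determinant of the deformed Cartan matrix C(q,t) of type B_ℓ equals q^{2ℓ−1} t^{−ℓ} + q^{−(2ℓ−1)} t^{ℓ}. (This is the type-B_ℓ entry of the determinant table in Section 4 of the paper, used to evaluate the Kac determinant.) -/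
/-!
Expanding along the first row and then the first column shows that `D l := det C_l(q,t)`
satisfies `D (l + 2) = (X + Y) D (l + 1) - D l` as soon as `l ≥ 1`, where `X = q²t⁻¹` and
`Y = q⁻²t` are the two roots of `z² - (X + Y) z + 1` (they satisfy `XY = 1`). Hence
`D (n + 1) = c Xⁿ + d Yⁿ`, and the values `D 1 = qt⁻¹ + q⁻¹t`, `D 2` fix `c = qt⁻¹`, `d = q⁻¹t`.
-/

/-- The deformed Cartan matrix of type `B_ℓ` (indexing `0,…,ℓ-1`; the last index is the
short simple root): `C_{ii} = q²t⁻¹ + q⁻²t` except `C_{ℓ-1,ℓ-1} = qt⁻¹ + q⁻¹t`;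
super-diagonal entries `-1`; sub-diagonal entries `-1` except the last one, which is
`-(q + q⁻¹)`; and `0` elsewhere. -/
noncomputable def cartanB (l : ℕ) (q t : ℂ) : Matrix (Fin l) (Fin l) ℂ :=
  Matrix.of fun i j =>
    if i = j then
      (if (i : ℕ) = l - 1 then q * t⁻¹ + q⁻¹ * t else q ^ 2 * t⁻¹ + q⁻¹ ^ 2 * t)
    else if (i : ℕ) + 1 = (j : ℕ) then -1
    else if (j : ℕ) + 1 = (i : ℕ) then
      (if (i : ℕ) = l - 1 then -(q + q⁻¹) else -1)
    else 0

namespace Matrix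

variable {R : Type*} [CommRing R]

theorem det_eq_of_tridiagonal_corner {n : ℕ} (M : Matrix (Fin (n + 2)) (Fin (n + 2)) R)
    (hrow : ∀ j : Fin n, M 0 j.succ.succ = 0) (hcol : ∀ i : Fin n, M i.succ.succ 0 = 0) :
    M.det = M 0 0 * (M.submatrix Fin.succ Fin.succ).det
      - M 0 1 * M 1 0 * ((M.submatrix Fin.succ Fin.succ).submatrix Fin.succ Fin.succ).det := by
  have hminor : (M.submatrix Fin.succ (Fin.succAbove 1)).det
      = M 1 0 * ((M.submatrix Fin.succ Fin.succ).submatrix Fin.succ Fin.succ).det := by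
    rw [det_succ_column_zero, Fin.sum_univ_succ]
    have hcols : Fin.succAbove (1 : Fin (n + 2)) ∘ Fin.succ = Fin.succ ∘ Fin.succ := by
      funext j
      rw [Function.comp_apply, ← Fin.succ_zero_eq_one, Fin.succ_succAbove_succ, Fin.succAbove_zero]
      rfl
    simp [hcol, hcols]
  rw [det_succ_row_zero, Fin.sum_univ_succ, Fin.sum_univ_succ]
  simp [hrow, hminor]
  ring

end Matrix

theorem combination_pow_recurrence {R : Type*} [CommRing R] {X Y : R} (hXY : X * Y = 1)
    (c d : R) (n : ℕ) :
    c * X ^ (n + 2) + d * Y ^ (n + 2)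
      = (X + Y) * (c * X ^ (n + 1) + d * Y ^ (n + 1)) - (c * X ^ n + d * Y ^ n) := by
  linear_combination -(c * X ^ n + d * Y ^ n) * hXY

section cartanB

variable (q t : ℂ)

theorem cartanB_submatrix_succ (l : ℕ) :
    (cartanB (l + 1) q t).submatrix Fin.succ Fin.succ = cartanB l q t := by
  ext i j
  have hlast : (i : ℕ) + 1 = l ↔ (i : ℕ) = l - 1 := by omega
  simp only [cartanB, Matrix.submatrix_apply, Matrix.of_apply, Fin.succ_inj, Fin.val_succ,
    Nat.add_sub_cancel, add_left_inj, hlast]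

theorem det_cartanB_one : (cartanB 1 q t).det = q * t⁻¹ + q⁻¹ * t := by
  simp [cartanB]

theorem det_cartanB_two :
    (cartanB 2 q t).det = (q ^ 2 * t⁻¹ + q⁻¹ ^ 2 * t) * (q * t⁻¹ + q⁻¹ * t) - (q + q⁻¹) := by
  simp [Matrix.det_fin_two, cartanB]

theorem det_cartanB_add_three (n : ℕ) :
    (cartanB (n + 3) q t).det
      = (q ^ 2 * t⁻¹ + q⁻¹ ^ 2 * t) * (cartanB (n + 2) q t).det - (cartanB (n + 1) q t).det := by
  rw [Matrix.det_eq_of_tridiagonal_corner, cartanB_submatrix_succ, cartanB_submatrix_succ]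
  · simp [cartanB]
  all_goals
    intro k
    simp only [cartanB, Matrix.of_apply, Fin.ext_iff, Fin.val_succ, Fin.val_zero]
    simp

theorem det_cartanB_succ (hq : q ≠ 0) (ht : t ≠ 0) (n : ℕ) :
    (cartanB (n + 1) q t).det = q * t⁻¹ * (q ^ 2 * t⁻¹) ^ n + q⁻¹ * t * (q⁻¹ ^ 2 * t) ^ n := by
  have hXY : q ^ 2 * t⁻¹ * (q⁻¹ ^ 2 * t) = 1 := by field_simp
  induction n using Nat.twoStepInduction with
  | zero => simpa using det_cartanB_one q t
  | one => rw [det_cartanB_two]; field_simp; ring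
  | more n ih₀ ih₁ =>
    rw [det_cartanB_add_three, ih₀, ih₁, combination_pow_recurrence hXY]

end cartanB

/-- The type-`B_ℓ` entry of the determinant table in Section 4 of the paper:
`det C(q,t) = q^{2ℓ-1} t^{-ℓ} + q^{-(2ℓ-1)} t^{ℓ}`. -/
theorem stmt10 (q t : ℂ) (hq : q ≠ 0) (ht : t ≠ 0) (l : ℕ) (hl : 2 ≤ l) :
    (cartanB l q t).det = q ^ (2 * l - 1) * t⁻¹ ^ l + q⁻¹ ^ (2 * l - 1) * t ^ l := by
  obtain ⟨n, rfl⟩ : ∃ n, l = n + 1 := ⟨l - 1, by omega⟩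
  rw [det_cartanB_succ q t hq ht, show 2 * (n + 1) - 1 = 2 * n + 1 by omega]
  ring
end

section
/- Let q, t be nonzero complex numbers. For every ℓ ≥ 2, the determinant of the deformed Cartan matrix C(q,t) of type C_ℓ equals q^{ℓ+1} t^{−ℓ} + q^{−(ℓ+1)} t^{ℓ}. (This is the type-C_ℓ entry of the determinant table in Section 4 of the paper, used to evaluate the Kac determinant.) -/
/-- The deformed Cartan matrix of type `C_ℓ` (indexing `0,…,ℓ-1`; the last index is the
long simple root): `C_{ii} = qt⁻¹ + q⁻¹t` except `C_{ℓ-1,ℓ-1} = q²t⁻¹ + q⁻²t`;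
sub-diagonal entries `-1`; super-diagonal entries `-1` except the last one, which is
`-(q + q⁻¹)`; and `0` elsewhere. -/
noncomputable def cartanC (l : ℕ) (q t : ℂ) : Matrix (Fin l) (Fin l) ℂ :=
  Matrix.of fun i j =>
    if i = j then
      (if (i : ℕ) = l - 1 then q ^ 2 * t⁻¹ + q⁻¹ ^ 2 * t else q * t⁻¹ + q⁻¹ * t)
    else if (j : ℕ) + 1 = (i : ℕ) then -1
    else if (i : ℕ) + 1 = (j : ℕ) then
      (if (j : ℕ) = l - 1 then -(q + q⁻¹) else -1)
    else 0


lemma cartanC_apply (l : ℕ) (q t : ℂ) (i j : Fin l) :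
    cartanC l q t i j =
    if (i : ℕ) = (j : ℕ) then
      (if (i : ℕ) = l - 1 then q ^ 2 * t⁻¹ + q⁻¹ ^ 2 * t else q * t⁻¹ + q⁻¹ * t)
    else if (j : ℕ) + 1 = (i : ℕ) then -1
    else if (i : ℕ) + 1 = (j : ℕ) then
      (if (j : ℕ) = l - 1 then -(q + q⁻¹) else -1)
    else 0 := by
  simp [cartanC, Fin.ext_iff]

lemma subA (l : ℕ) (q t : ℂ) :
    (cartanC (l+1) q t).submatrix Fin.succ Fin.succ = cartanC l q t := by
  ext i j
  have hi := i.isLt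
  have hj := j.isLt
  simp only [Matrix.submatrix_apply, cartanC_apply, Fin.val_succ]
  split_ifs <;> first | rfl | omega | exact absurd ‹False› not_false

lemma recC (l : ℕ) (hl : 1 ≤ l) (q t : ℂ) :
    (cartanC (l+2) q t).det =
      (q * t⁻¹ + q⁻¹ * t) * (cartanC (l+1) q t).det - (cartanC l q t).det := by
  set M := cartanC (l+2) q t with hM
  rw [Matrix.det_succ_column_zero, Fin.sum_univ_succ, Fin.sum_univ_succ]
  simp only [Fin.succ_zero_eq_one]
  have hv1 : ((1 : Fin (l+2)) : ℕ) = 1 := rfl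
  have h0 : M 0 0 = q * t⁻¹ + q⁻¹ * t := by
    rw [hM, cartanC_apply]
    simp only [Fin.val_zero]
    split_ifs <;> first | rfl | omega | exact absurd ‹False› not_false
  have h1 : M 1 0 = -1 := by
    rw [hM, cartanC_apply]
    simp only [Fin.val_zero, hv1]
    split_ifs <;> first | rfl | omega | exact absurd ‹False› not_false
  have hz : ∀ i : Fin l, M i.succ.succ 0 = 0 := by
    intro i
    rw [hM, cartanC_apply]
    simp only [Fin.val_zero, Fin.val_succ]
    split_ifs <;> first | rfl | omega | exact absurd ‹False› not_false
  have hsum0 : ∀ i : Fin l,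
      (-1 : ℂ) ^ ((i.succ.succ : Fin (l+2)) : ℕ) * M i.succ.succ 0 *
        (M.submatrix i.succ.succ.succAbove Fin.succ).det = 0 := by
    intro i; rw [hz]; ring
  rw [Finset.sum_congr rfl (fun i _ => hsum0 i), Finset.sum_const_zero, add_zero]
  have hsubA : (M.submatrix (Fin.succAbove 0) Fin.succ).det = (cartanC (l+1) q t).det := by
    rw [Fin.succAbove_zero, hM, subA]
  set N := M.submatrix (Fin.succAbove 1) Fin.succ with hN
  have hr0 : (1 : Fin (l+2)).succAbove 0 = 0 := by
    rw [Fin.succAbove_of_castSucc_lt _ _ (by simp [Fin.lt_def, hv1])]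
    simp
  have hNdet : N.det = -(cartanC l q t).det := by
    rw [Matrix.det_succ_row_zero, Fin.sum_univ_succ]
    have hN00 : N 0 0 = -1 := by
      rw [hN, Matrix.submatrix_apply, hr0, hM, cartanC_apply]
      have : ((Fin.succ 0 : Fin (l+2)) : ℕ) = 1 := rfl
      simp only [Fin.val_zero, this]
      split_ifs <;> first | rfl | omega | exact absurd ‹False› not_false
    have hNz : ∀ j : Fin l, N 0 j.succ = 0 := by
      intro j
      rw [hN, Matrix.submatrix_apply, hr0, hM, cartanC_apply]
      simp only [Fin.val_zero, Fin.val_succ]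
      split_ifs <;> first | rfl | omega | exact absurd ‹False› not_false
    have hrest : ∀ j : Fin l,
        (-1 : ℂ) ^ ((j.succ : Fin (l+1)) : ℕ) * N 0 j.succ *
          (N.submatrix Fin.succ j.succ.succAbove).det = 0 := by
      intro j; rw [hNz]; ring
    rw [Finset.sum_congr rfl (fun j _ => hrest j), Finset.sum_const_zero, add_zero,
      hN00, Fin.succAbove_zero]
    have hNsub : (N.submatrix Fin.succ Fin.succ) = cartanC l q t := by
      rw [hN, Matrix.submatrix_submatrix]
      have hfun : ((1 : Fin (l+2)).succAbove ∘ Fin.succ) =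
          (Fin.succ ∘ (Fin.succ : Fin l → Fin (l+1))) := by
        funext k
        simp only [Function.comp_apply]
        rw [Fin.succAbove_of_le_castSucc]
        simp [Fin.le_def, hv1]
      rw [hfun, show ((Fin.succ ∘ Fin.succ : Fin l → Fin (l+2)) = Fin.succ ∘ Fin.succ) from rfl,
        ← Matrix.submatrix_submatrix, subA, subA]
    rw [hNsub]
    simp
  rw [hNdet, h0, h1, hsubA, hv1]
  simp only [Fin.val_zero, pow_zero, pow_one, one_mul]
  ring

lemma base2 (q t : ℂ) (hq : q ≠ 0) (ht : t ≠ 0) :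
    (cartanC 2 q t).det = q ^ 3 * t⁻¹ ^ 2 + q⁻¹ ^ 3 * t ^ 2 := by
  have hQ : q * q⁻¹ = 1 := mul_inv_cancel₀ hq
  have hT : t * t⁻¹ = 1 := mul_inv_cancel₀ ht
  rw [Matrix.det_fin_two]
  simp only [cartanC_apply, Fin.val_zero, Fin.val_one]
  norm_num
  linear_combination (q + q⁻¹) * (t * t⁻¹) * hQ + (q + q⁻¹) * hT

lemma base3 (q t : ℂ) (hq : q ≠ 0) (ht : t ≠ 0) :
    (cartanC 3 q t).det = q ^ 4 * t⁻¹ ^ 3 + q⁻¹ ^ 4 * t ^ 3 := by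
  have hQ : q * q⁻¹ = 1 := mul_inv_cancel₀ hq
  have hT : t * t⁻¹ = 1 := mul_inv_cancel₀ ht
  rw [Matrix.det_fin_three]
  simp only [cartanC_apply, Fin.val_zero, Fin.val_one, Fin.val_two]
  norm_num
  linear_combination
    ((q⁻¹ ^ 2 * t + q ^ 2 * t⁻¹) + (q * t⁻¹ + q⁻¹ * t) * (q + q⁻¹)) * (t * t⁻¹) * hQ +
    ((q⁻¹ ^ 2 * t + q ^ 2 * t⁻¹) + (q * t⁻¹ + q⁻¹ * t) * (q + q⁻¹)) * hT

lemma key (q t : ℂ) (hq : q ≠ 0) (ht : t ≠ 0) : ∀ n : ℕ,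
    (cartanC (n+2) q t).det = q ^ (n+3) * t⁻¹ ^ (n+2) + q⁻¹ ^ (n+3) * t ^ (n+2) := by
  intro n
  induction n using Nat.twoStepInduction with
  | zero => exact base2 q t hq ht
  | one => exact base3 q t hq ht
  | more n ih2 ih1 =>
    have hQ : q * q⁻¹ = 1 := mul_inv_cancel₀ hq
    have hT : t * t⁻¹ = 1 := mul_inv_cancel₀ ht
    rw [show n + 2 + 2 = (n + 2) + 2 from rfl, recC (n+2) (by omega) q t, ih1, ih2]
    linear_combination
      ((q⁻¹ ^ (n+3) * t ^ (n+2) + q ^ (n+3) * t⁻¹ ^ (n+2)) * (t * t⁻¹)) * hQ +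
      (q⁻¹ ^ (n+3) * t ^ (n+2) + q ^ (n+3) * t⁻¹ ^ (n+2)) * hT

/-- The type-`C_ℓ` entry of the determinant table in Section 4 of the paper:
`det C(q,t) = q^{ℓ+1} t^{-ℓ} + q^{-(ℓ+1)} t^{ℓ}`. -/
theorem stmt11 (q t : ℂ) (hq : q ≠ 0) (ht : t ≠ 0) (l : ℕ) (hl : 2 ≤ l) :
    (cartanC l q t).det = q ^ (l + 1) * t⁻¹ ^ l + q⁻¹ ^ (l + 1) * t ^ l := by
  obtain ⟨n, rfl⟩ : ∃ n, l = n + 2 := ⟨l - 2, by omega⟩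
  simpa [add_comm, add_assoc, add_left_comm] using key q t hq ht n
end

section
/- Let q, t be nonzero complex numbers and set p = q t^{−1}. For every ℓ ≥ 3, the determinant of the deformed Cartan matrix C(q,t) of type D_ℓ equals (p + p^{−1})(p^{ℓ−1} + p^{−(ℓ−1)}). (This is the type-D_ℓ entry of the determinant table in Section 4 of the paper, used to evaluate the Kac determinant.) -/
/-- The deformed Cartan matrix of type `D_ℓ`: `(p + p⁻¹)·Id - A`, where `A` is the
adjacency matrix of the Dynkin diagram of `D_ℓ` with (0-based) edges `{i, i+1}` for
`0 ≤ i ≤ ℓ-3` together with `{ℓ-3, ℓ-1}`. -/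
noncomputable def cartanD (l : ℕ) (p : ℂ) : Matrix (Fin l) (Fin l) ℂ :=
  Matrix.of fun i j =>
    (if i = j then p + p⁻¹ else 0) -
    (if ((i : ℕ) + 1 = (j : ℕ) ∧ (j : ℕ) ≤ l - 2) ∨
        ((j : ℕ) + 1 = (i : ℕ) ∧ (i : ℕ) ≤ l - 2) ∨
        ((i : ℕ) = l - 3 ∧ (j : ℕ) = l - 1) ∨
        ((i : ℕ) = l - 1 ∧ (j : ℕ) = l - 3) then 1 else 0)

lemma cartanD_apply (l : ℕ) (p : ℂ) (i j : Fin l) :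
    cartanD l p i j =
    (if (i:ℕ) = (j:ℕ) then p + p⁻¹ else 0) -
    (if ((i : ℕ) + 1 = (j : ℕ) ∧ (j : ℕ) ≤ l - 2) ∨
        ((j : ℕ) + 1 = (i : ℕ) ∧ (i : ℕ) ≤ l - 2) ∨
        ((i : ℕ) = l - 3 ∧ (j : ℕ) = l - 1) ∨
        ((i : ℕ) = l - 1 ∧ (j : ℕ) = l - 3) then 1 else 0) := by
  simp only [cartanD, Matrix.of_apply, Fin.ext_iff]

lemma cartanD_sub {n : ℕ} (hn : 3 ≤ n) (p : ℂ) :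
    (cartanD (n+1) p).submatrix Fin.succ Fin.succ = cartanD n p := by
  ext i j
  have hi := i.isLt
  have hj := j.isLt
  simp only [Matrix.submatrix_apply, cartanD, Matrix.of_apply, Fin.succ_inj, Fin.val_succ]
  congr 1
  have h : ((i:ℕ) + 1 + 1 = (j:ℕ) + 1 ∧ (j:ℕ) + 1 ≤ n + 1 - 2 ∨
      ((j:ℕ) + 1 + 1 = (i:ℕ) + 1 ∧ (i:ℕ) + 1 ≤ n + 1 - 2) ∨
      ((i:ℕ) + 1 = n + 1 - 3 ∧ (j:ℕ) + 1 = n + 1 - 1) ∨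
      ((i:ℕ) + 1 = n + 1 - 1 ∧ (j:ℕ) + 1 = n + 1 - 3)) ↔
      ((i:ℕ) + 1 = (j:ℕ) ∧ (j:ℕ) ≤ n - 2 ∨
      ((j:ℕ) + 1 = (i:ℕ) ∧ (i:ℕ) ≤ n - 2) ∨
      ((i:ℕ) = n - 3 ∧ (j:ℕ) = n - 1) ∨
      ((i:ℕ) = n - 1 ∧ (j:ℕ) = n - 3)) := by omega
  simp only [h]

lemma cartanD_rec {n : ℕ} (hn : 3 ≤ n) (p : ℂ) :
    (cartanD (n+2) p).det =
      (p + p⁻¹) * (cartanD (n+1) p).det - (cartanD n p).det := by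
  set M := cartanD (n+2) p with hM
  have e00 : M 0 0 = p + p⁻¹ := by
    rw [hM, cartanD_apply, Fin.val_zero]
    rw [if_pos rfl, if_neg (by omega)]; ring
  have e01 : M 0 1 = -1 := by
    rw [hM, cartanD_apply, Fin.val_zero, Fin.val_one]
    rw [if_neg (by omega), if_pos (by omega)]; ring
  have e10 : M 1 0 = -1 := by
    rw [hM, cartanD_apply, Fin.val_zero, Fin.val_one]
    rw [if_neg (by omega), if_pos (by omega)]; ring
  have e0j : ∀ j : Fin n, M 0 j.succ.succ = 0 := by
    intro j
    have hj := j.isLt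
    rw [hM, cartanD_apply, Fin.val_zero, Fin.val_succ, Fin.val_succ]
    rw [if_neg (by omega), if_neg (by omega)]; ring
  have ei0 : ∀ i : Fin n, M i.succ.succ 0 = 0 := by
    intro i
    have hi := i.isLt
    rw [hM, cartanD_apply, Fin.val_zero, Fin.val_succ, Fin.val_succ]
    rw [if_neg (by omega), if_neg (by omega)]; ring
  have h1 : (M.submatrix Fin.succ Fin.succ) = cartanD (n+1) p :=
    cartanD_sub (by omega) p
  have sA0 : (1 : Fin (n+2)).succAbove 0 = 0 := by
    simp [Fin.succAbove, Fin.lt_def]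
  have sA : ∀ j : Fin n, (1 : Fin (n+2)).succAbove j.succ = j.succ.succ := by
    intro j; simp [Fin.succAbove, Fin.lt_def]
  have hN : (M.submatrix Fin.succ (Fin.succAbove (1 : Fin (n+2)))).det
      = - (cartanD n p).det := by
    set N := M.submatrix Fin.succ (Fin.succAbove (1 : Fin (n+2))) with hNdef
    have hNN : N.submatrix Fin.succ Fin.succ = cartanD n p := by
      have h2 : ((cartanD (n+2) p).submatrix Fin.succ Fin.succ).submatrix
          Fin.succ Fin.succ = cartanD n p := by
        rw [cartanD_sub (by omega) p]
        exact cartanD_sub hn p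
      rw [← h2]
      ext i j
      simp only [Matrix.submatrix_apply, hNdef, hM]
      rw [sA j]
    rw [Matrix.det_succ_column_zero, Fin.sum_univ_succ]
    have t0 : N 0 0 = -1 := by
      rw [hNdef]
      simp only [Matrix.submatrix_apply]
      rw [sA0, Fin.succ_zero_eq_one, e10]
    have trest : ∀ i : Fin n, N i.succ 0 = 0 := by
      intro i
      rw [hNdef]
      simp only [Matrix.submatrix_apply]
      rw [sA0, ei0]
    rw [Finset.sum_eq_zero (fun i _ => by rw [trest i]; ring)]
    rw [t0]
    simp only [Fin.val_zero, pow_zero, one_mul, Fin.succAbove_zero, hNN]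
    ring
  rw [Matrix.det_succ_row_zero, Fin.sum_univ_succ, Fin.sum_univ_succ]
  rw [Finset.sum_eq_zero (fun j _ => by rw [e0j j]; ring)]
  simp only [Fin.succ_zero_eq_one, Fin.val_zero, Fin.val_one, pow_zero, pow_one,
    one_mul, Fin.succAbove_zero]
  rw [e00, e01, h1, hN]
  ring

lemma cartanD_det3 (p : ℂ) (hp : p ≠ 0) :
    (cartanD 3 p).det = (p + p⁻¹) * (p ^ 2 + (p⁻¹) ^ 2) := by
  have hpr : p * p⁻¹ = 1 := mul_inv_cancel₀ hp
  rw [Matrix.det_fin_three]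
  simp only [cartanD, Matrix.of_apply]
  simp (config := { decide := true }) only [if_true, if_false]
  linear_combination (2 * (p + p⁻¹)) * hpr

lemma cartanD_det4 (p : ℂ) (hp : p ≠ 0) :
    (cartanD 4 p).det = (p + p⁻¹) * (p ^ 3 + (p⁻¹) ^ 3) := by
  have hpr : p * p⁻¹ = 1 := mul_inv_cancel₀ hp
  simp (config := { decide := true }) only [cartanD, Matrix.of_apply,
    Matrix.det_succ_row_zero, Fin.sum_univ_succ, Fin.sum_univ_zero,
    Matrix.submatrix_apply, Matrix.det_fin_one, if_true, if_false,
    Matrix.det_fin_zero, Fin.val_zero, Fin.val_succ, pow_zero, pow_one,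
    one_mul, mul_one, neg_neg]
  linear_combination (3 * (p + p⁻¹)^2) * hpr

lemma cartanD_det {p : ℂ} (hp : p ≠ 0) :
    ∀ l, 3 ≤ l → (cartanD l p).det = (p + p⁻¹) * (p ^ (l - 1) + (p⁻¹) ^ (l - 1)) := by
  have hpr : p * p⁻¹ = 1 := mul_inv_cancel₀ hp
  intro l
  induction l using Nat.strong_induction_on with
  | _ l ih =>
    intro hl
    rcases Nat.lt_or_ge l 5 with h5 | h5
    · interval_cases l
      · simpa using cartanD_det3 p hp
      · simpa using cartanD_det4 p hp
    · obtain ⟨m, rfl⟩ : ∃ m, l = m + 5 := ⟨l - 5, by omega⟩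
      have h1 := ih (m + 4) (by omega) (by omega)
      have h2 := ih (m + 3) (by omega) (by omega)
      have hr : (cartanD (m+5) p).det
          = (p + p⁻¹) * (cartanD (m+4) p).det - (cartanD (m+3) p).det :=
        cartanD_rec (n := m + 3) (by omega) p
      rw [hr, h1, h2]
      have e1 : m + 4 - 1 = m + 3 := by omega
      have e2 : m + 3 - 1 = m + 2 := by omega
      have e3 : m + 5 - 1 = m + 4 := by omega
      rw [e1, e2, e3]
      linear_combination ((p + p⁻¹) * (p^(m+2) + (p⁻¹)^(m+2))) * hpr

/-- The type-`D_ℓ` entry of the determinant table in Section 4 of the paper: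
`det C(q,t) = (p + p⁻¹)(p^{ℓ-1} + p^{-(ℓ-1)})`, where `p = q t⁻¹`. -/
theorem stmt12 (q t : ℂ) (hq : q ≠ 0) (ht : t ≠ 0) (l : ℕ) (hl : 3 ≤ l) :
    (cartanD l (q * t⁻¹)).det =
      (q * t⁻¹ + (q * t⁻¹)⁻¹) * ((q * t⁻¹) ^ (l - 1) + ((q * t⁻¹)⁻¹) ^ (l - 1)) := by
  exact cartanD_det (mul_ne_zero hq (inv_ne_zero ht)) l hl
end

section
/- Let ℓ ≥ 1 and for k ≥ 0 let p_ℓ(k) denote the number of ℓ-component multipartitions of k, i.e. ℓ-tuples (λ^{(1)},…,λ^{(ℓ)}) of integer partitions with |λ^{(1)}| + … + |λ^{(ℓ)}| = k. Then for every n ≥ 0 and every fixed index i ∈ {1,…,ℓ}, the sum over all ℓ-component multipartitions (λ^{(1)},…,λ^{(ℓ)}) of n of the number of parts of λ^{(i)} equals Σ_{r,s ≥ 1, rs ≤ n} p_ℓ(n − rs). (This combinatorial identity is exactly the equality of exponents in display (4.16) of the paper, which is the leading-term computation in the proof of the Kac determinant formula, Theorem 4.4.) -/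
open Finset

/-- An `l`-component multipartition of `n`: an `l`-tuple of integer partitions whose total
size is `n` (each component is recorded together with its size, bounded by `n`). -/
def MultiPartition (l n : ℕ) : Type :=
  {f : Fin l → Σ j : Fin (n + 1), Nat.Partition j.val // ∑ i, ((f i).1 : ℕ) = n}

instance (l n : ℕ) : Fintype (MultiPartition l n) := by
  unfold MultiPartition
  infer_instance

/-- `p_ℓ(k)`, the number of `l`-component multipartitions of `k`. -/
def multiPartitionCount (l k : ℕ) : ℕ := Fintype.card (MultiPartition l k)

/-- Multiset model of multipartitions. -/
def MPM (l m : ℕ) : Type :=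
  {g : Fin l → Multiset ℕ // (∀ i, ∀ x ∈ g i, 0 < x) ∧ ∑ i, (g i).sum = m}

lemma msum_le {μ ν : Multiset ℕ} (h : μ ≤ ν) : μ.sum ≤ ν.sum := by
  obtain ⟨u, rfl⟩ := Multiset.le_iff_exists_add.mp h
  simp

lemma sigma_parts_eq {n : ℕ} (a b : Σ j : Fin (n + 1), Nat.Partition j.val)
    (h : a.2.parts = b.2.parts) : a = b := by
  obtain ⟨⟨j, hj⟩, p⟩ := a
  obtain ⟨⟨k, hk⟩, q⟩ := b
  dsimp only at h
  have h1 : p.parts.sum = j := p.parts_sum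
  have h2 : q.parts.sum = k := q.parts_sum
  rw [h] at h1
  have hjk : j = k := by omega
  subst hjk
  simp only [Sigma.mk.inj_iff, heq_eq_eq, Fin.mk.injEq, true_and]
  ext1
  exact h

def mpEquiv (l m : ℕ) : MultiPartition l m ≃ MPM l m where
  toFun f := ⟨fun i => (f.1 i).2.parts,
    fun i x hx => (f.1 i).2.parts_pos hx,
    by simpa only [Nat.Partition.parts_sum] using f.2⟩
  invFun g := ⟨fun i =>
    ⟨⟨(g.1 i).sum, by
      have h : (g.1 i).sum ≤ ∑ j, (g.1 j).sum :=
        Finset.single_le_sum (f := fun j => (g.1 j).sum) (fun j _ => Nat.zero_le _)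
          (Finset.mem_univ i)
      have := le_of_le_of_eq h g.2.2
      omega⟩,
     ⟨g.1 i, fun hx => g.2.1 _ _ hx, rfl⟩⟩,
    g.2.2⟩
  left_inv f := by
    apply Subtype.ext
    funext i
    apply sigma_parts_eq
    rfl
  right_inv g := rfl

instance (l m : ℕ) : Fintype (MPM l m) := Fintype.ofEquiv _ (mpEquiv l m)

lemma mpm_card (l m : ℕ) : Fintype.card (MPM l m) = multiPartitionCount l m :=
  (Fintype.card_congr (mpEquiv l m)).symm

/-- Add `r` copies of `s` to component `i`. -/
def addEquiv (l n : ℕ) (i : Fin l) (r s : ℕ) (hs : 1 ≤ s) (hrs : r * s ≤ n) :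
    MPM l (n - r * s) ≃ {g : MPM l n // r ≤ (g.1 i).count s} where
  toFun g := ⟨⟨Function.update g.1 i (g.1 i + Multiset.replicate r s),
    by
      intro j x hx
      rcases eq_or_ne j i with rfl | hj
      · rw [Function.update_self] at hx
        rcases Multiset.mem_add.mp hx with h | h
        · exact g.2.1 _ _ h
        · rw [Multiset.eq_of_mem_replicate h]; omega
      · rw [Function.update_of_ne hj] at hx
        exact g.2.1 _ _ hx,
    by
      have key : (fun j => (Function.update g.1 i (g.1 i + Multiset.replicate r s) j).sum)
          = Function.update (fun j => (g.1 j).sum) i ((g.1 i + Multiset.replicate r s).sum) :=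
        funext (Function.apply_update (fun _ (μ : Multiset ℕ) => μ.sum) g.1 i _)
      rw [key, Finset.sum_update_of_mem (Finset.mem_univ i)]
      have hval : (g.1 i + Multiset.replicate r s).sum = (g.1 i).sum + r * s := by
        simp [Multiset.sum_replicate]
      have hsplit : ∑ j, (g.1 j).sum
          = (g.1 i).sum + ∑ j ∈ Finset.univ \ {i}, (g.1 j).sum := by
        rw [Finset.sum_eq_add_sum_sdiff_singleton_of_mem (Finset.mem_univ i)]
      have htot := g.2.2
      rw [hsplit] at htot
      omega⟩,
    by
      simp [Function.update_self, Multiset.count_replicate]⟩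
  invFun g := ⟨Function.update g.1.1 i (g.1.1 i - Multiset.replicate r s),
    by
      intro j x hx
      rcases eq_or_ne j i with rfl | hj
      · rw [Function.update_self] at hx
        exact g.1.2.1 _ _ (Multiset.mem_of_le tsub_le_self hx)
      · rw [Function.update_of_ne hj] at hx
        exact g.1.2.1 _ _ hx,
    by
      have hle : Multiset.replicate r s ≤ g.1.1 i :=
        Multiset.le_count_iff_replicate_le.mp g.2
      have hsum : (g.1.1 i - Multiset.replicate r s).sum + r * s = (g.1.1 i).sum := by
        have := tsub_add_cancel_of_le hle
        calc (g.1.1 i - Multiset.replicate r s).sum + r * s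
            = ((g.1.1 i - Multiset.replicate r s) + Multiset.replicate r s).sum := by
              simp [Multiset.sum_replicate]
          _ = (g.1.1 i).sum := by rw [this]
      have key : (fun j => (Function.update g.1.1 i (g.1.1 i - Multiset.replicate r s) j).sum)
          = Function.update (fun j => (g.1.1 j).sum) i ((g.1.1 i - Multiset.replicate r s).sum) :=
        funext (Function.apply_update (fun _ (μ : Multiset ℕ) => μ.sum) g.1.1 i _)
      rw [key, Finset.sum_update_of_mem (Finset.mem_univ i)]
      have hsplit : ∑ j, (g.1.1 j).sum
          = (g.1.1 i).sum + ∑ j ∈ Finset.univ \ {i}, (g.1.1 j).sum := by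
        rw [Finset.sum_eq_add_sum_sdiff_singleton_of_mem (Finset.mem_univ i)]
      have htot := g.1.2.2
      rw [hsplit] at htot
      omega⟩
  left_inv g := by
    apply Subtype.ext
    funext j
    simp only [Function.update_self]
    rcases eq_or_ne j i with rfl | hj
    · simp
    · simp [Function.update_of_ne hj]
  right_inv g := by
    apply Subtype.ext
    apply Subtype.ext
    funext j
    have hle : Multiset.replicate r s ≤ g.1.1 i :=
      Multiset.le_count_iff_replicate_le.mp g.2
    rcases eq_or_ne j i with rfl | hj
    · simp [tsub_add_cancel_of_le hle]
    · simp [Function.update_of_ne hj]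

/-- The combinatorial identity of display (4.16) of the paper (the leading-term
computation in the proof of the Kac determinant formula, Theorem 4.4): for any fixed
component `i`, the total number of parts of the `i`-th components of all `l`-component
multipartitions of `n` equals `Σ_{r,s ≥ 1, rs ≤ n} p_ℓ(n - rs)`. -/
theorem stmt19 (l : ℕ) (hl : 1 ≤ l) (n : ℕ) (i : Fin l) :
    ∑ f : MultiPartition l n, ((f.1 i).2.parts.card) =
      ∑ r ∈ Finset.Icc 1 n, ∑ s ∈ Finset.Icc 1 n,
        if r * s ≤ n then multiPartitionCount l (n - r * s) else 0 := by
  -- transport to multiset model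
  rw [← Equiv.sum_comp (mpEquiv l n).symm (fun g : MultiPartition l n => ((g.1 i).2.parts.card))]
  have hform : ∀ g : MPM l n,
      (((((mpEquiv l n).symm g) : MultiPartition l n).1 i).2.parts.card) = (g.1 i).card := by
    intro g; rfl
  simp only [hform]
  -- basic bounds
  have hsumle : ∀ g : MPM l n, (g.1 i).sum ≤ n := by
    intro g
    have h : (g.1 i).sum ≤ ∑ j, (g.1 j).sum :=
      Finset.single_le_sum (f := fun j => (g.1 j).sum) (fun j _ => Nat.zero_le _)
        (Finset.mem_univ i)
    exact le_of_le_of_eq h g.2.2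
  have hmem : ∀ g : MPM l n, ∀ x ∈ g.1 i, x ∈ Finset.Icc 1 n := by
    intro g x hx
    have h1 := g.2.1 i x hx
    have h2 : x ≤ (g.1 i).sum := Multiset.single_le_sum (fun y _ => Nat.zero_le y) x hx
    exact Finset.mem_Icc.mpr ⟨h1, h2.trans (hsumle g)⟩
  have hcount : ∀ g : MPM l n, ∀ s, 1 ≤ s → (g.1 i).count s * s ≤ n := by
    intro g s _
    have hle : Multiset.replicate ((g.1 i).count s) s ≤ g.1 i :=
      Multiset.le_count_iff_replicate_le.mp le_rfl
    have h2 := msum_le hle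
    simpa [Multiset.sum_replicate] using h2.trans (hsumle g)
  -- step 1: card = sum of counts over Icc 1 n
  have step1 : ∀ g : MPM l n, (g.1 i).card = ∑ s ∈ Finset.Icc 1 n, (g.1 i).count s := by
    intro g
    rw [← Multiset.toFinset_sum_count_eq]
    apply Finset.sum_subset
    · intro s hs
      exact hmem g s (Multiset.mem_toFinset.mp hs)
    · intro s _ hs
      simpa [Multiset.count_eq_zero] using fun h => hs (Multiset.mem_toFinset.mpr h)
  -- step 2: count = sum of indicators over r
  have step2 : ∀ g : MPM l n, ∀ s, 1 ≤ s →
      (g.1 i).count s = ∑ r ∈ Finset.Icc 1 n, if r ≤ (g.1 i).count s then 1 else 0 := by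
    intro g s hs
    have hcn : (g.1 i).count s ≤ n := by
      have := hcount g s hs
      nlinarith
    rw [show (∑ r ∈ Finset.Icc 1 n, if r ≤ (g.1 i).count s then 1 else 0)
        = #{r ∈ Finset.Icc 1 n | r ≤ (g.1 i).count s} from Finset.sum_boole _ _]
    have : Finset.filter (fun r => r ≤ (g.1 i).count s) (Finset.Icc 1 n)
        = Finset.Icc 1 ((g.1 i).count s) := by
      ext r
      simp only [Finset.mem_filter, Finset.mem_Icc]
      omega
    rw [this, Nat.card_Icc]
    omega
  calc ∑ g : MPM l n, (g.1 i).card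
      = ∑ g : MPM l n, ∑ s ∈ Finset.Icc 1 n, ∑ r ∈ Finset.Icc 1 n,
          (if r ≤ (g.1 i).count s then 1 else 0) := by
        refine Finset.sum_congr rfl fun g _ => ?_
        rw [step1 g]
        refine Finset.sum_congr rfl fun s hs => ?_
        exact step2 g s (Finset.mem_Icc.mp hs).1
    _ = ∑ r ∈ Finset.Icc 1 n, ∑ s ∈ Finset.Icc 1 n, ∑ g : MPM l n,
          (if r ≤ (g.1 i).count s then 1 else 0) := by
        calc ∑ g : MPM l n, ∑ s ∈ Finset.Icc 1 n, ∑ r ∈ Finset.Icc 1 n,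
              (if r ≤ (g.1 i).count s then 1 else 0)
            = ∑ g : MPM l n, ∑ r ∈ Finset.Icc 1 n, ∑ s ∈ Finset.Icc 1 n,
              (if r ≤ (g.1 i).count s then 1 else 0) :=
              Finset.sum_congr rfl fun g _ => Finset.sum_comm
          _ = ∑ r ∈ Finset.Icc 1 n, ∑ g : MPM l n, ∑ s ∈ Finset.Icc 1 n,
              (if r ≤ (g.1 i).count s then 1 else 0) := Finset.sum_comm
          _ = ∑ r ∈ Finset.Icc 1 n, ∑ s ∈ Finset.Icc 1 n, ∑ g : MPM l n,
              (if r ≤ (g.1 i).count s then 1 else 0) :=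
              Finset.sum_congr rfl fun r _ => Finset.sum_comm
    _ = ∑ r ∈ Finset.Icc 1 n, ∑ s ∈ Finset.Icc 1 n,
          (if r * s ≤ n then multiPartitionCount l (n - r * s) else 0) := by
        refine Finset.sum_congr rfl fun r hr => Finset.sum_congr rfl fun s hs => ?_
        obtain ⟨hr1, _⟩ := Finset.mem_Icc.mp hr
        obtain ⟨hs1, _⟩ := Finset.mem_Icc.mp hs
        by_cases hrs : r * s ≤ n
        · rw [if_pos hrs]
          have : ∑ g : MPM l n, (if r ≤ (g.1 i).count s then 1 else 0)
              = Fintype.card {g : MPM l n // r ≤ (g.1 i).count s} := by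
            rw [Fintype.card_subtype]
            exact Finset.sum_boole _ _
          rw [this, ← Fintype.card_congr (addEquiv l n i r s hs1 hrs), mpm_card]
        · rw [if_neg hrs]
          refine Finset.sum_eq_zero fun g _ => ?_
          rw [if_neg]
          intro hcon
          have := hcount g s hs1
          have : r * s ≤ n := le_trans (Nat.mul_le_mul_right s hcon) this
          exact hrs this
end
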